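/- A square 0-1 matrix A is idempotent (A² = A) if and only if it is permutation similar to a block matrix [[0, X, XY],[0, I, Y],[0, 0, 0]], where the zero diagonal blocks are square and may have size 0, and X, Y are 0-1 matrices such that XY is a 0-1 matrix. -/

import Mathlib

open Matrix

/-- A 0-1 matrix over the integers. -/
def IsZeroOne {α β : Type*} (A : Matrix α β ℤ) : Prop :=
  ∀ i j, A i j = 0 ∨ A i j = 1

/-- The block matrix [[0, X, Z],[0, P, Y],[0, 0, 0]] with square zero diagonal blocks. -/
def blockH {α β γ : Type*} (X : Matrix α β ℤ) (P : Matrix β β ℤ)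
    (Y : Matrix β γ ℤ) (Z : Matrix α γ ℤ) : Matrix (α ⊕ β ⊕ γ) (α ⊕ β ⊕ γ) ℤ :=
  Matrix.fromBlocks 0 (Matrix.fromCols X Z) 0 (Matrix.fromBlocks P Y 0 0)

/-!
Entries of `A` are nonnegative, so `A² = A` says that a `1`-entry `A i j` has exactly one "middle"
index `k` with `A i k = A k j = 1`, and a `0`-entry has none. Hence the `1`-entries form a
transitive relation, the indices with `A i i = 1` are pairwise unrelated, every `1`-entry factors
through such an index, and an index `i` with `A i i = 0` and a `1` in row `i` has a zero column.
Listing first these indices, then the indices with `A i i = 1`, then the zero rows, gives the block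
form; its corner block is `X * Y` because in `A i j = ∑ k, A i k * A k j` only the middle group
contributes. Conversely, the block matrix is idempotent by block multiplication.
-/

theorem IsZeroOne.nonneg {α β : Type*} {A : Matrix α β ℤ} (h01 : IsZeroOne A) (i : α) (j : β) :
    0 ≤ A i j := by
  rcases h01 i j with h | h <;> simp [h]

theorem IsZeroOne.submatrix {α β α' β' : Type*} {A : Matrix α β ℤ} (h01 : IsZeroOne A)
    (f : α' → α) (g : β' → β) : IsZeroOne (A.submatrix f g) :=
  fun i j => h01 (f i) (g j)

theorem IsIdempotentElem.sum_apply_mul_apply {ι R : Type*} [Fintype ι] [Semiring R]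
    {A : Matrix ι ι R} (hA : IsIdempotentElem A) (i j : ι) : ∑ k, A i k * A k j = A i j := by
  rw [← mul_apply, hA.eq]

namespace IsZeroOne

section Idempotent

variable {ι : Type*} [Fintype ι] {A : Matrix ι ι ℤ} (h01 : IsZeroOne A) (hA : IsIdempotentElem A)
include h01 hA

theorem apply_eq_one_trans {i j k : ι} (hik : A i k = 1) (hkj : A k j = 1) : A i j = 1 := by
  have : A i k * A k j ≤ A i j := by
    rw [← hA.sum_apply_mul_apply i j]
    exact Finset.single_le_sum (fun l _ => mul_nonneg (h01.nonneg i l) (h01.nonneg l j))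
      (Finset.mem_univ k)
  rw [hik, hkj] at this
  rcases h01 i j with h | h <;> omega

theorem eq_of_apply_eq_one {i j k l : ι} (hik : A i k = 1) (hkj : A k j = 1) (hil : A i l = 1)
    (hlj : A l j = 1) : k = l := by
  classical
  by_contra hkl
  have : A i k * A k j + A i l * A l j ≤ A i j := by
    rw [← Finset.sum_pair (f := fun m => A i m * A m j) hkl, ← hA.sum_apply_mul_apply]
    exact Finset.sum_le_sum_of_subset_of_nonneg (Finset.subset_univ _)
      fun m _ _ => mul_nonneg (h01.nonneg i m) (h01.nonneg m j)
  rw [hik, hkj, hil, hlj, h01.apply_eq_one_trans hA hik hkj] at this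
  omega

theorem exists_apply_eq_one_of_apply_eq_one {i j : ι} (hij : A i j = 1) :
    ∃ k, A i k = 1 ∧ A k j = 1 := by
  obtain ⟨k, -, hk⟩ := Finset.exists_ne_zero_of_sum_ne_zero
    (s := Finset.univ) (f := fun k => A i k * A k j)
    (by rw [hA.sum_apply_mul_apply, hij]; exact one_ne_zero)
  exact ⟨k, (h01 i k).resolve_left (left_ne_zero_of_mul hk),
    (h01 k j).resolve_left (right_ne_zero_of_mul hk)⟩

theorem exists_diag_eq_one {i j : ι} (hij : A i j = 1) :
    ∃ k, A k k = 1 ∧ A i k = 1 ∧ A k j = 1 := by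
  obtain ⟨k, hik, hkj⟩ := h01.exists_apply_eq_one_of_apply_eq_one hA hij
  obtain ⟨l, hkl, hlj⟩ := h01.exists_apply_eq_one_of_apply_eq_one hA hkj
  obtain rfl : k = l := h01.eq_of_apply_eq_one hA hik hkj (h01.apply_eq_one_trans hA hik hkl) hlj
  exact ⟨k, hkl, hik, hkj⟩

theorem apply_eq_zero_of_diag_eq_one {i j : ι} (hi : A i i = 1) (hj : A j j = 1) (hij : i ≠ j) :
    A i j = 0 :=
  (h01 i j).resolve_right fun h => hij (h01.eq_of_apply_eq_one hA hi h h hj)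

theorem apply_eq_zero_of_diag_eq_zero {i j : ι} (hii : A i i = 0) (hij : A i j = 1) (k : ι) :
    A k i = 0 := by
  refine (h01 k i).resolve_right fun hki => ?_
  obtain ⟨m, hmm, him, -⟩ := h01.exists_diag_eq_one hA hij
  obtain rfl : i = m :=
    h01.eq_of_apply_eq_one hA hki him (h01.apply_eq_one_trans hA hki him) hmm
  rw [hii] at hmm
  exact zero_ne_one hmm

end Idempotent

end IsZeroOne

theorem exists_equiv_fin_sum_fin_sum_fin {ι : Type*} [Fintype ι] (P Q : ι → Prop) :
    ∃ (r m s : ℕ) (e : ι ≃ Fin r ⊕ Fin m ⊕ Fin s),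
      (∀ a, P (e.symm (.inl a))) ∧
        (∀ b, ¬ P (e.symm (.inr (.inl b))) ∧ Q (e.symm (.inr (.inl b)))) ∧
        ∀ c, ¬ P (e.symm (.inr (.inr c))) ∧ ¬ Q (e.symm (.inr (.inr c))) := by
  classical
  refine ⟨_, _, _, (Equiv.sumCompl P).symm.trans ((Fintype.equivFin _).sumCongr
    ((Equiv.sumCompl fun x : {i // ¬ P i} => Q x).symm.trans
      ((Fintype.equivFin _).sumCongr (Fintype.equivFin _)))), ?_, ?_, ?_⟩ <;>
  intro x <;>
  simp only [Equiv.symm_trans_apply, Equiv.sumCongr_symm, Equiv.sumCongr_apply, Sum.map_inl,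
    Sum.map_inr, Equiv.symm_symm, Equiv.sumCompl_apply_inl, Equiv.sumCompl_apply_inr]
  exacts [((Fintype.equivFin _).symm x).2,
    ⟨((Fintype.equivFin _).symm x).1.2, ((Fintype.equivFin _).symm x).2⟩,
    ⟨((Fintype.equivFin _).symm x).1.2, ((Fintype.equivFin _).symm x).2⟩]

theorem IsIdempotentElem.submatrix_mul_submatrix_eq_submatrix {ι α β γ κ μ R : Type*}
    [Fintype ι] [Fintype α] [Fintype β] [Fintype γ] [Semiring R] {A : Matrix ι ι R}
    (hA : IsIdempotentElem A) (e : ι ≃ α ⊕ β ⊕ γ) (hα : ∀ a i, A i (e.symm (.inl a)) = 0)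
    (hγ : ∀ c j, A (e.symm (.inr (.inr c))) j = 0) (f : κ → ι) (g : μ → ι) :
    A.submatrix f (e.symm ∘ .inr ∘ .inl) * A.submatrix (e.symm ∘ .inr ∘ .inl) g =
      A.submatrix f g := by
  ext i j
  rw [submatrix_apply, ← hA.sum_apply_mul_apply, ← e.symm.sum_comp, Fintype.sum_sum_type,
    Fintype.sum_sum_type]
  simp [mul_apply, hα, hγ]

theorem IsZeroOne.submatrix_eq_blockH {ι α β γ : Type*} [Fintype ι] [DecidableEq β]
    {A : Matrix ι ι ℤ} (h01 : IsZeroOne A) (hA : IsIdempotentElem A)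
    (e : ι ≃ α ⊕ β ⊕ γ) (hα : ∀ a i, A i (e.symm (.inl a)) = 0)
    (hβ : ∀ b, A (e.symm (.inr (.inl b))) (e.symm (.inr (.inl b))) = 1)
    (hγ : ∀ c j, A (e.symm (.inr (.inr c))) j = 0) :
    A.submatrix e.symm e.symm =
      blockH (A.submatrix (e.symm ∘ .inl) (e.symm ∘ .inr ∘ .inl)) 1
        (A.submatrix (e.symm ∘ .inr ∘ .inl) (e.symm ∘ .inr ∘ .inr))
        (A.submatrix (e.symm ∘ .inl) (e.symm ∘ .inr ∘ .inr)) := by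
  ext (a | b | c) (a' | b' | c') <;> simp [blockH, hα, hγ, one_apply]
  split_ifs with hbb
  · exact hbb ▸ hβ b
  · exact h01.apply_eq_zero_of_diag_eq_one hA (hβ b) (hβ b')
      (e.symm.injective.ne (by simpa using hbb))

theorem isIdempotentElem_blockH {α β γ : Type*} [Fintype α] [Fintype β] [Fintype γ]
    [DecidableEq β] (X : Matrix α β ℤ) (Y : Matrix β γ ℤ) :
    IsIdempotentElem (blockH X 1 Y (X * Y)) := by
  rw [IsIdempotentElem, blockH, fromBlocks_multiply, fromBlocks_multiply, fromCols_mul_fromBlocks]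
  simp

theorem IsZeroOne.exists_blockH_of_isIdempotentElem {ι : Type*} [Fintype ι] {A : Matrix ι ι ℤ}
    (h01 : IsZeroOne A) (hA : IsIdempotentElem A) :
    ∃ (r m s : ℕ) (X : Matrix (Fin r) (Fin m) ℤ) (Y : Matrix (Fin m) (Fin s) ℤ),
      IsZeroOne X ∧ IsZeroOne Y ∧ IsZeroOne (X * Y) ∧
      ∃ e : ι ≃ (Fin r ⊕ Fin m ⊕ Fin s), ∀ i j, A i j = blockH X 1 Y (X * Y) (e i) (e j) := by
  obtain ⟨r, m, s, e, hR, hM, hS⟩ :=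
    exists_equiv_fin_sum_fin_sum_fin (fun i => A i i = 0 ∧ ∃ j, A i j = 1) (fun i => A i i = 1)
  have hα : ∀ a i, A i (e.symm (.inl a)) = 0 := fun a i =>
    have ⟨hii, _, hij⟩ := hR a
    h01.apply_eq_zero_of_diag_eq_zero hA hii hij i
  have hγ : ∀ c j, A (e.symm (.inr (.inr c))) j = 0 := fun c j => by
    obtain ⟨hnR, hnM⟩ := hS c
    have hii := (h01 _ _).resolve_right hnM
    exact (h01 _ j).resolve_right fun hij => hnR ⟨hii, j, hij⟩
  have hXY :=
    hA.submatrix_mul_submatrix_eq_submatrix e hα hγ (e.symm ∘ .inl) (e.symm ∘ .inr ∘ .inr)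
  refine ⟨r, m, s, _, _, h01.submatrix _ _, h01.submatrix _ _, hXY ▸ h01.submatrix _ _, e,
    fun i j => ?_⟩
  rw [hXY, ← h01.submatrix_eq_blockH hA e hα (fun b => (hM b).2) hγ]
  simp

theorem stmt8 {n : ℕ} (A : Matrix (Fin n) (Fin n) ℤ) (h01 : IsZeroOne A) :
    A ^ 2 = A ↔
      ∃ (r m s : ℕ) (X : Matrix (Fin r) (Fin m) ℤ) (Y : Matrix (Fin m) (Fin s) ℤ),
        IsZeroOne X ∧ IsZeroOne Y ∧ IsZeroOne (X * Y) ∧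
        ∃ e : Fin n ≃ (Fin r ⊕ Fin m ⊕ Fin s),
          ∀ i j, A i j = blockH X (1 : Matrix (Fin m) (Fin m) ℤ) Y (X * Y) (e i) (e j) := by
  rw [sq]
  refine ⟨h01.exists_blockH_of_isIdempotentElem, ?_⟩
  rintro ⟨r, m, s, X, Y, -, -, -, e, he⟩
  obtain rfl : A = (blockH X 1 Y (X * Y)).submatrix e e := Matrix.ext he
  rw [submatrix_mul_equiv, (isIdempotentElem_blockH X Y).eq]
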